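/- arXiv:1405.4776 — 3 statements merged into one kernel-verified Lean document; each statement's English description precedes it below -/
import Mathlib

section
/- Under the conditions of the reduced relative entropy estimate (same equations, same initial data, bounded L∞ norms) with zero residual R ≡ 0, strong periodic solutions of the regularized elastodynamics system ∂ₜu − ∂ₓv = 0, ∂ₜv − ∂ₓW′(u) = μ∂ₓₓv − γ∂ₓₓₓu are unique. -/
/-!
Write `φ = u - û` and `ψ = v - v̂`. Subtracting the equations gives `∂ₜφ = ∂ₓψ` and
`∂ₜψ - μ ∂ₓₓψ + γ ∂ₓₓₓφ = ∂ₓ(W'(u) - W'(û))`; since `W''` is bounded and Lipschitz on `[-M̄, M̄]`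
and `∂ₓû` is bounded on compact sets, the right-hand side is at most `A (|∂ₓφ| + |φ|)` up to any
time `T`. For the energy `E = ∫₀¹ ψ² + γ (∂ₓφ)² + φ²`, periodic integration by parts makes the
dispersive terms `γ ∂ₓₓₓφ` cancel against those of `γ (∂ₓφ)²`, turns the viscous term into
`-2μ ∫ (∂ₓψ)² ≤ 0` and `∫ 2φ ∂ₓψ` into `-∫ 2 ∂ₓφ ψ`, so `E' ≤ K E`. As `E(0) = 0`, Grönwall's
inequality forces `E ≡ 0` on `[0, ∞)`.
-/

open Set Function

noncomputable def partialX (f : ℝ → ℝ → ℝ) : ℝ → ℝ → ℝ := fun t x => deriv (f t) x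

noncomputable def partialT (f : ℝ → ℝ → ℝ) : ℝ → ℝ → ℝ := fun t x => deriv (fun s => f s x) t

section Slices

variable {E : Type*} [NormedAddCommGroup E] [NormedSpace ℝ E] {G : ℝ × ℝ → E} {t x : ℝ}

lemma DifferentiableAt.hasDerivAt_comp_prodMk_left (hG : DifferentiableAt ℝ G (t, x)) :
    HasDerivAt (fun s => G (s, x)) (fderiv ℝ G (t, x) (1, 0)) t :=
  hG.hasFDerivAt.comp_hasDerivAt t ((hasDerivAt_id t).prodMk (hasDerivAt_const t x))

lemma DifferentiableAt.hasDerivAt_comp_prodMk_right (hG : DifferentiableAt ℝ G (t, x)) :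
    HasDerivAt (fun y => G (t, y)) (fderiv ℝ G (t, x) (0, 1)) x :=
  hG.hasFDerivAt.comp_hasDerivAt x ((hasDerivAt_const x t).prodMk (hasDerivAt_id x))

end Slices

section PartialDerivatives

variable {f g : ℝ → ℝ → ℝ} {m n : WithTop ℕ∞}

lemma ContDiff.uncurry_apply (hf : ContDiff ℝ n ↿f) (t : ℝ) : ContDiff ℝ n (f t) :=
  hf.comp (contDiff_prodMk_right t)

lemma hasDerivAt_partialT (hf : Differentiable ℝ ↿f) (t x : ℝ) :
    HasDerivAt (f · x) (partialT f t x) t :=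
  ((hf (t, x)).hasDerivAt_comp_prodMk_left.differentiableAt).hasDerivAt

lemma hasDerivAt_partialX (hf : Differentiable ℝ ↿f) (t x : ℝ) :
    HasDerivAt (f t) (partialX f t x) x :=
  ((hf (t, x)).hasDerivAt_comp_prodMk_right.differentiableAt).hasDerivAt

lemma partialT_eq_fderiv (hf : Differentiable ℝ ↿f) (t x : ℝ) :
    partialT f t x = fderiv ℝ ↿f (t, x) (1, 0) :=
  (hf (t, x)).hasDerivAt_comp_prodMk_left.deriv

lemma partialX_eq_fderiv (hf : Differentiable ℝ ↿f) (t x : ℝ) :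
    partialX f t x = fderiv ℝ ↿f (t, x) (0, 1) :=
  (hf (t, x)).hasDerivAt_comp_prodMk_right.deriv

lemma ContDiff.differentiable_of_succ_le (hf : ContDiff ℝ n ↿f) (hmn : m + 1 ≤ n) :
    Differentiable ℝ ↿f :=
  hf.differentiable (ne_bot_of_le_ne_bot (by simp) hmn)

lemma contDiff_partialT (hf : ContDiff ℝ n ↿f) (hmn : m + 1 ≤ n) :
    ContDiff ℝ m ↿(partialT f) := by
  have h : ↿(partialT f) = fun p => fderiv ℝ ↿f p (1, 0) :=
    funext fun p => partialT_eq_fderiv (hf.differentiable_of_succ_le hmn) p.1 p.2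
  rw [h]
  exact (hf.fderiv_right hmn).clm_apply contDiff_const

lemma contDiff_partialX (hf : ContDiff ℝ n ↿f) (hmn : m + 1 ≤ n) :
    ContDiff ℝ m ↿(partialX f) := by
  have h : ↿(partialX f) = fun p => fderiv ℝ ↿f p (0, 1) :=
    funext fun p => partialX_eq_fderiv (hf.differentiable_of_succ_le hmn) p.1 p.2
  rw [h]
  exact (hf.fderiv_right hmn).clm_apply contDiff_const

lemma hasDerivAt_partialX_left (hf : ContDiff ℝ 2 ↿f) (t x : ℝ) :
    HasDerivAt (fun s => partialX f s x) (partialX (partialT f) t x) t := by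
  have hd : Differentiable ℝ ↿f := hf.differentiable two_ne_zero
  have hd' : Differentiable ℝ (fderiv ℝ ↿f) :=
    (hf.fderiv_right (m := 1) le_rfl).differentiable one_ne_zero
  set f'' := fderiv ℝ (fderiv ℝ ↿f) (t, x)
  have hsymm : f'' (1, 0) (0, 1) = f'' (0, 1) (1, 0) :=
    second_derivative_symmetric (fun p => (hd p).hasFDerivAt) (hd' (t, x)).hasFDerivAt _ _
  have hxt : partialX (partialT f) t x = f'' (0, 1) (1, 0) := by
    have h : partialT f t = fun y => fderiv ℝ ↿f (t, y) (1, 0) := funext (partialT_eq_fderiv hd t)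
    simpa [partialX, h] using ((hd' (t, x)).hasDerivAt_comp_prodMk_right.clm_apply
      (hasDerivAt_const x ((1 : ℝ), (0 : ℝ)))).deriv
  simp only [partialX_eq_fderiv hd, hxt, ← hsymm]
  simpa using (hd' (t, x)).hasDerivAt_comp_prodMk_left.clm_apply
    (hasDerivAt_const t ((0 : ℝ), (1 : ℝ)))

lemma partialT_sub (hf : Differentiable ℝ ↿f) (hg : Differentiable ℝ ↿g) :
    partialT (f - g) = partialT f - partialT g :=
  funext₂ fun t x => ((hasDerivAt_partialT hf t x).sub (hasDerivAt_partialT hg t x)).deriv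

lemma partialX_sub (hf : Differentiable ℝ ↿f) (hg : Differentiable ℝ ↿g) :
    partialX (f - g) = partialX f - partialX g :=
  funext₂ fun t x => ((hasDerivAt_partialX hf t x).sub (hasDerivAt_partialX hg t x)).deriv

noncomputable def momentumResidual (γ μ : ℝ) (φ ψ : ℝ → ℝ → ℝ) (t x : ℝ) : ℝ :=
  partialT ψ t x - μ * partialX (partialX ψ) t x + γ * partialX (partialX (partialX φ)) t x

lemma momentumResidual_sub {γ μ : ℝ} {u v hatu hatv : ℝ → ℝ → ℝ} (hu : ContDiff ℝ 3 ↿u)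
    (hhatu : ContDiff ℝ 3 ↿hatu) (hv : ContDiff ℝ 2 ↿v) (hhatv : ContDiff ℝ 2 ↿hatv) (t x : ℝ) :
    momentumResidual γ μ (u - hatu) (v - hatv) t x
      = momentumResidual γ μ u v t x - momentumResidual γ μ hatu hatv t x := by
  have hux := contDiff_partialX (m := 2) hu le_rfl
  have hhatux := contDiff_partialX (m := 2) hhatu le_rfl
  have hvx := contDiff_partialX (m := 1) hv le_rfl
  have hhatvx := contDiff_partialX (m := 1) hhatv le_rfl
  rw [momentumResidual, momentumResidual, momentumResidual,
    partialT_sub (hv.differentiable two_ne_zero) (hhatv.differentiable two_ne_zero),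
    partialX_sub (hv.differentiable two_ne_zero) (hhatv.differentiable two_ne_zero),
    partialX_sub (hvx.differentiable one_ne_zero) (hhatvx.differentiable one_ne_zero),
    partialX_sub (hu.differentiable (by norm_num)) (hhatu.differentiable (by norm_num)),
    partialX_sub (hux.differentiable two_ne_zero) (hhatux.differentiable two_ne_zero),
    partialX_sub ((contDiff_partialX (m := 1) hux le_rfl).differentiable one_ne_zero)
      ((contDiff_partialX (m := 1) hhatux le_rfl).differentiable one_ne_zero)]
  simp only [Pi.sub_apply]
  ring

end PartialDerivatives

lemma hasDerivAt_intervalIntegral_of_continuous {E : Type*} [NormedAddCommGroup E]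
    [NormedSpace ℝ E] [CompleteSpace E] {F F' : ℝ → ℝ → E}
    (hF : Continuous ↿F) (hF' : Continuous ↿F') (hFF' : ∀ s x, HasDerivAt (F · x) (F' s x) s)
    (a b t : ℝ) :
    HasDerivAt (fun s => ∫ x in a..b, F s x) (∫ x in a..b, F' t x) t := by
  obtain ⟨B, hB⟩ := (isCompact_closedBall t 1 |>.prod isCompact_uIcc).exists_bound_of_continuousOn
    hF'.continuousOn
  refine (intervalIntegral.hasDerivAt_integral_of_dominated_loc_of_deriv_le (bound := fun _ => B)
    (Metric.ball_mem_nhds t one_pos)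
    (.of_forall fun s => (hF.comp (Continuous.prodMk_right s)).aestronglyMeasurable)
    ((hF.comp (Continuous.prodMk_right t)).intervalIntegrable a b)
    (hF'.comp (Continuous.prodMk_right t)).aestronglyMeasurable
    (.of_forall fun x hx s hs => hB (s, x) ⟨Metric.ball_subset_closedBall hs, uIoc_subset_uIcc hx⟩)
    intervalIntegrable_const (.of_forall fun x _ s _ => hFF' s x)).2

lemma Function.Periodic.deriv {𝕜 F : Type*} [NontriviallyNormedField 𝕜] [NormedAddCommGroup F]
    [NormedSpace 𝕜 F] {f : 𝕜 → F} {c : 𝕜} (hf : Periodic f c) : Periodic (deriv f) c := fun x => by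
  rw [← deriv_comp_add_const, hf.funext]

lemma Function.Periodic.intervalIntegral_deriv_eq_zero {P P' : ℝ → ℝ} {c : ℝ}
    (hP : ∀ x, HasDerivAt P (P' x) x) (hP' : Continuous P') (hper : Periodic P c) :
    ∫ x in (0 : ℝ)..c, P' x = 0 := by
  rw [intervalIntegral.integral_eq_sub_of_hasDerivAt (fun x _ => hP x) (hP'.intervalIntegrable 0 c),
    hper.eq, sub_self]

lemma Function.Periodic.eq_zero_of_intervalIntegral_eq_zero {h : ℝ → ℝ} {c : ℝ} (hc : 0 < c)
    (hper : Periodic h c) (hcont : Continuous h) (hnonneg : ∀ x, 0 ≤ h x)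
    (hint : ∫ x in (0 : ℝ)..c, h x = 0) : h = 0 := by
  have hae : h =ᵐ[MeasureTheory.volume.restrict (Ioc 0 c)] 0 := by
    have := (intervalIntegral.integral_eq_zero_iff_of_nonneg_ae (.of_forall hnonneg)
      (hcont.intervalIntegrable 0 c)).mp hint
    rwa [Ioc_eq_empty (not_lt.mpr hc.le), union_empty] at this
  have hIoc : EqOn h 0 (Ioc 0 c) :=
    MeasureTheory.Measure.eqOn_Ioc_of_ae_eq _ hae hcont.continuousOn continuousOn_const
  funext x
  obtain ⟨y, hy, hxy⟩ := hper.exists_mem_Ico₀ hc x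
  rcases hy.1.eq_or_lt with rfl | hy0
  · rw [hxy, ← hper.eq]; exact hIoc ⟨hc, le_rfl⟩
  · rw [hxy]; exact hIoc ⟨hy0, hy.2.le⟩

lemma two_mul_sub_le_energy {a b c r A γ : ℝ} (hγ : 0 < γ) (hr : |r| ≤ A * (|b| + |c|)) :
    2 * a * r - 2 * b * a ≤ (2 * |A| + 1) * (1 + γ⁻¹) * (a ^ 2 + γ * b ^ 2 + c ^ 2) := by
  set K := (2 * |A| + 1) * (1 + γ⁻¹)
  have hA := abs_nonneg A
  have hK : 2 * |A| + 1 ≤ K := le_mul_of_one_le_right (by positivity) (by simp [inv_nonneg.2 hγ.le])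
  have hKγ : K * γ = (2 * |A| + 1) * (γ + 1) := by simp only [K]; field_simp
  have h1 : 2 * a * r ≤ 2 * |a| * (|A| * (|b| + |c|)) := by
    calc 2 * a * r ≤ 2 * |a| * |r| := by
          rw [mul_assoc, mul_assoc, ← abs_mul]; linarith [le_abs_self (a * r)]
      _ ≤ _ := by gcongr; exact hr.trans (by gcongr; exact le_abs_self A)
  nlinarith [sq_abs a, sq_abs b, sq_abs c, sq_nonneg (a + b), mul_nonneg hA (sq_nonneg (|a| - |b|)),
    mul_nonneg hA (sq_nonneg (|a| - |c|)), mul_le_mul_of_nonneg_right hK (sq_nonneg a),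
    mul_le_mul_of_nonneg_right hK (sq_nonneg c), mul_nonneg (mul_nonneg hA hγ.le) (sq_nonneg b)]

lemma integral_energy_rate_le {f g h : ℝ → ℝ} {γ μ A : ℝ} (hγ : 0 < γ) (hμ : 0 ≤ μ)
    (hf : ContDiff ℝ 3 f) (hg : ContDiff ℝ 2 g) (hh : Continuous h)
    (hfper : Periodic f 1) (hgper : Periodic g 1)
    (hA : ∀ x ∈ Icc (0 : ℝ) 1,
      |h x - μ * deriv (deriv g) x + γ * deriv (deriv (deriv f)) x| ≤ A * (|deriv f x| + |f x|)) :
    ∫ x in (0 : ℝ)..1, 2 * g x * h x + 2 * γ * deriv f x * deriv (deriv g) x + 2 * f x * deriv g x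
      ≤ (2 * |A| + 1) * (1 + γ⁻¹) * ∫ x in (0 : ℝ)..1, g x ^ 2 + γ * deriv f x ^ 2 + f x ^ 2 := by
  have hf1 : ContDiff ℝ 2 (deriv f) := hf.deriv'
  have hf2 : ContDiff ℝ 1 (deriv (deriv f)) := hf1.deriv'
  have hg1 : ContDiff ℝ 1 (deriv g) := hg.deriv'
  have hf3 := hf2.continuous_deriv le_rfl
  have hg2 := hg1.continuous_deriv le_rfl
  have hdf := hf.differentiable (by norm_num)
  have hdf1 := hf1.differentiable (by norm_num)
  have hdf2 := hf2.differentiable (by norm_num)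
  have hdg := hg.differentiable (by norm_num)
  have hdg1 := hg1.differentiable (by norm_num)
  -- `P'` collects the exact derivatives in the rate;
  -- the rest is `2g(h - μg'' + γf''') - 2μg'² - 2f'g`.
  set P := fun x => 2 * μ * g x * deriv g x - 2 * γ * g x * deriv (deriv f) x
    + 2 * γ * deriv f x * deriv g x + 2 * f x * g x
  set P' := fun x => 2 * μ * (deriv g x ^ 2 + g x * deriv (deriv g) x)
    - 2 * γ * (deriv g x * deriv (deriv f) x + g x * deriv (deriv (deriv f)) x)
    + 2 * γ * (deriv (deriv f) x * deriv g x + deriv f x * deriv (deriv g) x)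
    + 2 * (deriv f x * g x + f x * deriv g x)
  have hP : ∀ x, HasDerivAt P (P' x) x := fun x => by
    have hg' := (hdg x).hasDerivAt
    have hg1' := (hdg1 x).hasDerivAt
    have hf' := (hdf x).hasDerivAt
    have hf1' := (hdf1 x).hasDerivAt
    have hf2' := (hdf2 x).hasDerivAt
    refine (((((hg'.const_mul (2 * μ)).mul hg1').sub ((hg'.const_mul (2 * γ)).mul hf2')).add
      ((hf1'.const_mul (2 * γ)).mul hg1')).add ((hf'.const_mul 2).mul hg')).congr_deriv ?_
    simp only [P']; ring
  have hPper : Periodic P 1 := fun x => by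
    simp only [P, hfper x, hgper x, hfper.deriv x, hgper.deriv x, hfper.deriv.deriv x]
  have := hf.continuous; have := hf1.continuous; have := hf2.continuous
  have := hg.continuous; have := hg1.continuous
  have hP'c : Continuous P' := by fun_prop
  have hpt : ∀ x ∈ Icc (0 : ℝ) 1,
      2 * g x * h x + 2 * γ * deriv f x * deriv (deriv g) x + 2 * f x * deriv g x
        ≤ (2 * |A| + 1) * (1 + γ⁻¹) * (g x ^ 2 + γ * deriv f x ^ 2 + f x ^ 2) + P' x := by
    intro x hx
    have := two_mul_sub_le_energy (a := g x) hγ (hA x hx)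
    have := mul_nonneg hμ (sq_nonneg (deriv g x))
    simp only [P']
    linarith
  calc _ ≤ ∫ x in (0 : ℝ)..1,
          (2 * |A| + 1) * (1 + γ⁻¹) * (g x ^ 2 + γ * deriv f x ^ 2 + f x ^ 2) + P' x :=
        intervalIntegral.integral_mono_on zero_le_one
          (by apply Continuous.intervalIntegrable; fun_prop)
          (by apply Continuous.intervalIntegrable; fun_prop) hpt
    _ = _ := by
      rw [intervalIntegral.integral_add (by apply Continuous.intervalIntegrable; fun_prop)
          (hP'c.intervalIntegrable 0 1), intervalIntegral.integral_const_mul,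
        hPper.intervalIntegral_deriv_eq_zero hP hP'c, add_zero]

noncomputable def dispersiveEnergy (γ : ℝ) (φ ψ : ℝ → ℝ → ℝ) (t : ℝ) : ℝ :=
  ∫ x in (0 : ℝ)..1, ψ t x ^ 2 + γ * partialX φ t x ^ 2 + φ t x ^ 2

lemma hasDerivAt_dispersiveEnergy {γ : ℝ} {φ ψ : ℝ → ℝ → ℝ} (hφ : ContDiff ℝ 2 ↿φ)
    (hψ : ContDiff ℝ 2 ↿ψ) (hφψ : partialT φ = partialX ψ) (t : ℝ) :
    HasDerivAt (dispersiveEnergy γ φ ψ)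
      (∫ x in (0 : ℝ)..1, 2 * ψ t x * partialT ψ t x
        + 2 * γ * partialX φ t x * partialX (partialX ψ) t x + 2 * φ t x * partialX ψ t x) t := by
  have hφx := contDiff_partialX (m := 1) hφ le_rfl
  have hψx := contDiff_partialX (m := 1) hψ le_rfl
  have hψt := contDiff_partialT (m := 1) hψ le_rfl
  have hψxx := contDiff_partialX (m := 0) hψx le_rfl
  have := hφ.continuous; have := hψ.continuous; have := hφx.continuous
  have := hψx.continuous; have := hψt.continuous; have := hψxx.continuous
  refine hasDerivAt_intervalIntegral_of_continuous
    (F := fun s x => ψ s x ^ 2 + γ * partialX φ s x ^ 2 + φ s x ^ 2)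
    (F' := fun s x => 2 * ψ s x * partialT ψ s x
        + 2 * γ * partialX φ s x * partialX (partialX ψ) s x + 2 * φ s x * partialX ψ s x)
    (by fun_prop) (by fun_prop)
    (fun s x => ?_) 0 1 t
  have hφt := hasDerivAt_partialT (hφ.differentiable two_ne_zero) s x
  have hφxt := hasDerivAt_partialX_left hφ s x
  rw [hφψ] at hφt hφxt
  refine ((((hasDerivAt_partialT (hψ.differentiable two_ne_zero) s x).pow 2).add
    ((hφxt.pow 2).const_mul γ)).add (hφt.pow 2)).congr_deriv ?_
  ring

theorem eq_zero_of_dispersive_system {φ ψ : ℝ → ℝ → ℝ} {γ μ A T : ℝ} (hγ : 0 < γ) (hμ : 0 ≤ μ)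
    (hφ : ContDiff ℝ 3 ↿φ) (hψ : ContDiff ℝ 2 ↿ψ)
    (hφper : ∀ t, Periodic (φ t) 1) (hψper : ∀ t, Periodic (ψ t) 1)
    (hφ0 : φ 0 = 0) (hψ0 : ψ 0 = 0) (hφψ : partialT φ = partialX ψ)
    (hforcing : ∀ t ∈ Icc 0 T, ∀ x ∈ Icc (0 : ℝ) 1,
      |momentumResidual γ μ φ ψ t x| ≤ A * (|partialX φ t x| + |φ t x|))
    (hT : 0 ≤ T) : φ T = 0 ∧ ψ T = 0 := by
  have hE := hasDerivAt_dispersiveEnergy (γ := γ) (hφ.of_le (by norm_num)) hψ hφψ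
  have hE0 : dispersiveEnergy γ φ ψ 0 = 0 := by
    simp [dispersiveEnergy, partialX, hφ0, hψ0]
  have hET : dispersiveEnergy γ φ ψ T ≤ 0 := by
    have := le_gronwallBound_of_liminf_deriv_right_le
      (continuous_iff_continuousAt.2 fun t => (hE t).continuousAt).continuousOn
      (fun t _ r hr => (hE t).hasDerivWithinAt.liminf_right_slope_le hr) hE0.le
      (fun t ht => by
        rw [add_zero]
        exact integral_energy_rate_le hγ hμ (hφ.uncurry_apply t) (hψ.uncurry_apply t)
          ((contDiff_partialT (m := 1) hψ le_rfl).uncurry_apply t).continuous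
          (hφper t) (hψper t) (hforcing t (Ico_subset_Icc_self ht)))
      T ⟨hT, le_rfl⟩
    rwa [gronwallBound_ε0_δ0] at this
  have hnonneg : ∀ x, 0 ≤ ψ T x ^ 2 + γ * partialX φ T x ^ 2 + φ T x ^ 2 := fun x =>
    add_nonneg (add_nonneg (sq_nonneg _) (mul_nonneg hγ.le (sq_nonneg _))) (sq_nonneg _)
  have hdensity : (fun x => ψ T x ^ 2 + γ * partialX φ T x ^ 2 + φ T x ^ 2) = 0 := by
    have := (hφ.uncurry_apply T).continuous
    have := (hψ.uncurry_apply T).continuous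
    have := ((contDiff_partialX (m := 2) hφ le_rfl).uncurry_apply T).continuous
    refine Periodic.eq_zero_of_intervalIntegral_eq_zero one_pos (fun x => ?_) (by fun_prop) hnonneg
      (hET.antisymm (intervalIntegral.integral_nonneg zero_le_one fun x _ => hnonneg x))
    simp only [partialX, hψper T x, hφper T x, (hφper T).deriv x]
  refine ⟨funext fun x => ?_, funext fun x => ?_⟩ <;>
  · have h := congrFun hdensity x
    rw [Pi.zero_apply] at h
    refine pow_eq_zero_iff two_ne_zero |>.1 ?_
    nlinarith [sq_nonneg (ψ T x), mul_nonneg hγ.le (sq_nonneg (partialX φ T x)), sq_nonneg (φ T x)]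

lemma abs_deriv_comp_sub_deriv_comp_le {F a b : ℝ → ℝ} {s : Set ℝ} {L κ x : ℝ}
    (hF : ContDiff ℝ 2 F) (hs : Convex ℝ s) (ha : DifferentiableAt ℝ a x)
    (hb : DifferentiableAt ℝ b x) (hax : a x ∈ s) (hbx : b x ∈ s)
    (hF1 : ∀ y ∈ s, |deriv F y| ≤ L) (hF2 : ∀ y ∈ s, |deriv (deriv F) y| ≤ L)
    (hb' : |deriv b x| ≤ κ) :
    |deriv (fun y => F (a y)) x - deriv (fun y => F (b y)) x|
      ≤ L * (1 + κ) * (|deriv a x - deriv b x| + |a x - b x|) := by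
  have hdF : Differentiable ℝ F := hF.differentiable two_ne_zero
  have hdF' : Differentiable ℝ (deriv F) := hF.deriv'.differentiable one_ne_zero
  have hlip : |deriv F (a x) - deriv F (b x)| ≤ L * |a x - b x| := by
    simpa only [Real.norm_eq_abs] using
      hs.norm_image_sub_le_of_norm_deriv_le (fun y _ => hdF' y) hF2 hbx hax
  have hL : 0 ≤ L := (abs_nonneg _).trans (hF1 _ hax)
  have hκ : 0 ≤ κ := (abs_nonneg _).trans hb'
  have hFa : deriv (fun y => F (a y)) x = deriv F (a x) * deriv a x :=
    ((hdF (a x)).hasDerivAt.comp x ha.hasDerivAt).deriv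
  have hFb : deriv (fun y => F (b y)) x = deriv F (b x) * deriv b x :=
    ((hdF (b x)).hasDerivAt.comp x hb.hasDerivAt).deriv
  rw [hFa, hFb]
  calc |deriv F (a x) * deriv a x - deriv F (b x) * deriv b x|
      = |deriv F (a x) * (deriv a x - deriv b x)
          + (deriv F (a x) - deriv F (b x)) * deriv b x| := by ring_nf
    _ ≤ L * |deriv a x - deriv b x| + L * |a x - b x| * κ := by
      refine (abs_add_le _ _).trans ?_
      rw [abs_mul, abs_mul]
      gcongr
      · exact hF1 _ hax
    _ ≤ L * (1 + κ) * (|deriv a x - deriv b x| + |a x - b x|) := by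
      nlinarith [mul_nonneg hL hκ, abs_nonneg (deriv a x - deriv b x), abs_nonneg (a x - b x),
        mul_nonneg (mul_nonneg hL hκ) (abs_nonneg (deriv a x - deriv b x))]

theorem uniqueness_of_strong_solutions_general
    (W : ℝ → ℝ) (hW : ContDiff ℝ 3 W)
    (γ μ : ℝ) (hγ : 0 < γ) (hμ : 0 ≤ μ)
    (u v hatu hatv : ℝ → ℝ → ℝ)
    (hu : ContDiff ℝ 3 (fun p : ℝ × ℝ => u p.1 p.2))
    (hv : ContDiff ℝ 3 (fun p : ℝ × ℝ => v p.1 p.2))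
    (hhatu : ContDiff ℝ 3 (fun p : ℝ × ℝ => hatu p.1 p.2))
    (hhatv : ContDiff ℝ 3 (fun p : ℝ × ℝ => hatv p.1 p.2))
    (hper : ∀ t, Function.Periodic (u t) 1 ∧ Function.Periodic (v t) 1 ∧
      Function.Periodic (hatu t) 1 ∧ Function.Periodic (hatv t) 1)
    -- exact solution
    (heq1 : ∀ t x, deriv (fun s => u s x) t - deriv (v t) x = 0)
    (heq2 : ∀ t x,
      deriv (fun s => v s x) t - deriv (fun y => deriv W (u t y)) x
        = μ * deriv (deriv (v t)) x - γ * deriv (deriv (deriv (u t))) x)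
    -- perturbed solution with residual R
    (heq1' : ∀ t x, deriv (fun s => hatu s x) t - deriv (hatv t) x = 0)
    (heq2' : ∀ t x,
      deriv (fun s => hatv s x) t - deriv (fun y => deriv W (hatu t y)) x
        = μ * deriv (deriv (hatv t)) x - γ * deriv (deriv (deriv (hatu t))) x)
    -- same initial data
    (hinitu : ∀ x, u 0 x = hatu 0 x) (hinitv : ∀ x, v 0 x = hatv 0 x)
    -- L∞ bound M̄ and C³ bound W̄ of W on [−M̄, M̄]
    (Mb Wb : ℝ)
    (hMb : ∀ t x, |u t x| ≤ Mb ∧ |hatu t x| ≤ Mb)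
    (hWb : ∀ y ∈ Icc (-Mb) Mb,
      |W y| ≤ Wb ∧ |deriv W y| ≤ Wb ∧ |deriv (deriv W) y| ≤ Wb ∧
        |deriv (deriv (deriv W)) y| ≤ Wb) :
    ∀ t : ℝ, 0 ≤ t → ∀ x : ℝ, u t x = hatu t x ∧ v t x = hatv t x := by
  intro T hT x
  have hdu := hu.differentiable (by norm_num)
  have hdhatu := hhatu.differentiable (by norm_num)
  obtain ⟨κ, hκ⟩ := (isCompact_Icc.prod isCompact_Icc).exists_bound_of_continuousOn
    ((contDiff_partialX (m := 2) hhatu le_rfl).continuous.continuousOn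
      (s := Icc 0 T ×ˢ Icc (0 : ℝ) 1))
  have hφψ : partialT (u - hatu) = partialX (v - hatv) := by
    rw [partialT_sub hdu hdhatu,
      partialX_sub (hv.differentiable (by norm_num)) (hhatv.differentiable (by norm_num))]
    funext t y
    simp only [Pi.sub_apply, partialT, partialX]
    linarith [heq1 t y, heq1' t y]
  have hres : ∀ t y, momentumResidual γ μ u v t y = deriv (fun y => deriv W (u t y)) y :=
    fun t y => by unfold momentumResidual partialT partialX; linarith [heq2 t y]
  have hres' : ∀ t y, momentumResidual γ μ hatu hatv t y = deriv (fun y => deriv W (hatu t y)) y :=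
    fun t y => by unfold momentumResidual partialT partialX; linarith [heq2' t y]
  have hforcing : ∀ t ∈ Icc 0 T, ∀ y ∈ Icc (0 : ℝ) 1,
      |momentumResidual γ μ (u - hatu) (v - hatv) t y|
        ≤ Wb * (1 + κ) * (|partialX (u - hatu) t y| + |(u - hatu) t y|) := by
    intro t ht y hy
    rw [momentumResidual_sub hu hhatu (hv.of_le (by norm_num)) (hhatv.of_le (by norm_num)),
      hres, hres', partialX_sub hdu hdhatu]
    exact abs_deriv_comp_sub_deriv_comp_le hW.deriv' (convex_Icc (-Mb) Mb)
      ((ContDiff.uncurry_apply (f := u) hu t).differentiable (by norm_num) y)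
      ((ContDiff.uncurry_apply (f := hatu) hhatu t).differentiable (by norm_num) y)
      (abs_le.1 (hMb t y).1) (abs_le.1 (hMb t y).2) (fun z hz => (hWb z hz).2.2.1)
      (fun z hz => (hWb z hz).2.2.2) (hκ (t, y) ⟨ht, hy⟩)
  obtain ⟨hφ, hψ⟩ := eq_zero_of_dispersive_system hγ hμ (hu.sub hhatu)
    ((hv.sub hhatv).of_le (by norm_num)) (fun t => (hper t).1.sub (hper t).2.2.1)
    (fun t => (hper t).2.1.sub (hper t).2.2.2) (funext fun x => sub_eq_zero.2 (hinitu x))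
    (funext fun x => sub_eq_zero.2 (hinitv x)) hφψ hforcing hT
  exact ⟨sub_eq_zero.1 (congrFun hφ x), sub_eq_zero.1 (congrFun hψ x)⟩

/-- Uniqueness of strong periodic solutions of the regularized
elastodynamics system (zero residual case of the reduced relative entropy bound). -/
theorem uniqueness_of_strong_solutions
    (W : ℝ → ℝ) (hW : ContDiff ℝ 3 W)
    (γ μ : ℝ) (hγ : 0 < γ) (hμ : 0 ≤ μ)
    (u v hatu hatv : ℝ → ℝ → ℝ)
    (hu : ContDiff ℝ 3 (fun p : ℝ × ℝ => u p.1 p.2))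
    (hv : ContDiff ℝ 3 (fun p : ℝ × ℝ => v p.1 p.2))
    (hhatu : ContDiff ℝ 3 (fun p : ℝ × ℝ => hatu p.1 p.2))
    (hhatv : ContDiff ℝ 3 (fun p : ℝ × ℝ => hatv p.1 p.2))
    (hper : ∀ t, Function.Periodic (u t) 1 ∧ Function.Periodic (v t) 1 ∧
      Function.Periodic (hatu t) 1 ∧ Function.Periodic (hatv t) 1)
    -- exact solution
    (heq1 : ∀ t x, deriv (fun s => u s x) t - deriv (v t) x = 0)
    (heq2 : ∀ t x,
      deriv (fun s => v s x) t - deriv (fun y => deriv W (u t y)) x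
        = μ * deriv (deriv (v t)) x - γ * deriv (deriv (deriv (u t))) x)
    -- perturbed solution with residual R
    (heq1' : ∀ t x, deriv (fun s => hatu s x) t - deriv (hatv t) x = 0)
    (heq2' : ∀ t x,
      deriv (fun s => hatv s x) t - deriv (fun y => deriv W (hatu t y)) x
        = μ * deriv (deriv (hatv t)) x - γ * deriv (deriv (deriv (hatu t))) x)
    -- same initial data
    (hinitu : ∀ x, u 0 x = hatu 0 x) (hinitv : ∀ x, v 0 x = hatv 0 x)
    -- mean-zero difference (so that the Poincaré inequality applies)
    (hmean : ∀ t, (∫ x in (0:ℝ)..1, (u t x - hatu t x)) = 0)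
    -- L∞ bound M̄ and C³ bound W̄ of W on [−M̄, M̄]
    (Mb Wb : ℝ)
    (hMb : ∀ t x, |u t x| ≤ Mb ∧ |hatu t x| ≤ Mb)
    (hWb : ∀ y ∈ Icc (-Mb) Mb,
      |W y| ≤ Wb ∧ |deriv W y| ≤ Wb ∧ |deriv (deriv W) y| ≤ Wb ∧
        |deriv (deriv (deriv W)) y| ≤ Wb)
    -- Poincaré constant on S¹ for mean-zero functions
    (CP : ℝ) (hCPpos : 0 < CP)
    (hCP : ∀ w : ℝ → ℝ, ContDiff ℝ 1 w → Function.Periodic w 1 →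
      (∫ x in (0:ℝ)..1, w x) = 0 →
      (∫ x in (0:ℝ)..1, (w x) ^ 2) ≤ CP ^ 2 * ∫ x in (0:ℝ)..1, (deriv w x) ^ 2) :
    ∀ t : ℝ, 0 ≤ t → ∀ x : ℝ, u t x = hatu t x ∧ v t x = hatv t x :=
  uniqueness_of_strong_solutions_general W hW γ μ hγ hμ u v hatu hatv hu hv hhatu hhatv hper heq1
    heq2 heq1' heq2' hinitu hinitv Mb Wb hMb hWb
end

section
/- Let G⁺, G⁻ : H¹(𝒯) → V_p be the discrete gradient operators defined by ∫_{S¹} G^±[ψ]Φ = Σ_K ∫_K ∂ₓψ Φ − ∫_E ⟦ψ⟧ Φ^± for all Φ ∈ V_p, where V_p is the space of piecewise polynomials of degree ≤ p on a periodic partition of S¹. Then for all Ψ, Φ ∈ V_p, ∫_{S¹} G^±[Ψ]Φ = −∫_{S¹} Ψ G^∓[Φ]. -/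
open scoped BigOperators
noncomputable section

def prevIdx {N : ℕ} (j : Fin N) : Fin N :=
  ⟨(j.1 + (N - 1)) % N, Nat.mod_lt _ j.pos⟩

def tracePlus {N : ℕ} (nodes : Fin (N + 1) → ℝ) (f : Fin N → ℝ → ℝ) (j : Fin N) : ℝ :=
  f j (nodes j.castSucc)

def traceMinus {N : ℕ} (nodes : Fin (N + 1) → ℝ) (f : Fin N → ℝ → ℝ) (j : Fin N) : ℝ :=
  f (prevIdx j) (nodes (prevIdx j).succ)

def jmp {N : ℕ} (nodes : Fin (N + 1) → ℝ) (f : Fin N → ℝ → ℝ) (j : Fin N) : ℝ :=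
  traceMinus nodes f j - tracePlus nodes f j

/-- `f` is a broken (discontinuous) piecewise polynomial of degree ≤ p. -/
def IsPolyPiece (N p : ℕ) (f : Fin N → ℝ → ℝ) : Prop :=
  ∀ i, ∃ q : Polynomial ℝ, q.natDegree ≤ p ∧ ∀ x, f i x = q.eval x

/-- Elementwise integral Σ_K ∫_K f over the mesh. -/
def elemInt {N : ℕ} (nodes : Fin (N + 1) → ℝ) (f : Fin N → ℝ → ℝ) : ℝ :=
  ∑ i : Fin N, ∫ x in (nodes i.castSucc)..(nodes i.succ), f i x

/-- Defining property of the discrete gradient operator G⁺ applied to `F`: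
∫ G⁺[F] Φ = Σ_K ∫_K ∂ₓF Φ − ∫_E ⟦F⟧ Φ⁺ for all Φ ∈ V_p. -/
def IsDiscGradPlus {N : ℕ} (p : ℕ) (nodes : Fin (N + 1) → ℝ)
    (F G : Fin N → ℝ → ℝ) : Prop :=
  IsPolyPiece N p G ∧
  ∀ Φ : Fin N → ℝ → ℝ, IsPolyPiece N p Φ →
    elemInt nodes (fun i x => G i x * Φ i x)
      = elemInt nodes (fun i x => deriv (F i) x * Φ i x)
        - ∑ j : Fin N, jmp nodes F j * tracePlus nodes Φ j

/-- Defining property of the discrete gradient operator G⁻ applied to `F`. -/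
def IsDiscGradMinus {N : ℕ} (p : ℕ) (nodes : Fin (N + 1) → ℝ)
    (F G : Fin N → ℝ → ℝ) : Prop :=
  IsPolyPiece N p G ∧
  ∀ Φ : Fin N → ℝ → ℝ, IsPolyPiece N p Φ →
    elemInt nodes (fun i x => G i x * Φ i x)
      = elemInt nodes (fun i x => deriv (F i) x * Φ i x)
        - ∑ j : Fin N, jmp nodes F j * traceMinus nodes Φ j

lemma prevIdx_bij {N : ℕ} : Function.Bijective (prevIdx (N := N)) := by
  rw [← Finite.injective_iff_bijective]
  intro a b h
  have h' : (a.1 + (N-1)) % N = (b.1 + (N-1)) % N := congrArg Fin.val h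
  have := (Nat.ModEq.add_right_cancel' (N-1) h')
  exact Fin.ext (by simpa [Nat.ModEq, Nat.mod_eq_of_lt a.isLt, Nat.mod_eq_of_lt b.isLt] using this)

lemma sum_prevIdx {N : ℕ} (g : Fin N → ℝ) :
    ∑ j : Fin N, g (prevIdx j) = ∑ j : Fin N, g j :=
  Fintype.sum_bijective prevIdx prevIdx_bij _ g (fun _ => rfl)

lemma poly_ftc (q r : Polynomial ℝ) (a b : ℝ) :
    (∫ x in a..b, q.derivative.eval x * r.eval x)
      + (∫ x in a..b, r.derivative.eval x * q.eval x)
    = q.eval b * r.eval b - q.eval a * r.eval a := by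
  have hint : ∀ s t : Polynomial ℝ, IntervalIntegrable (fun x => s.eval x * t.eval x) MeasureTheory.volume a b := by
    intro s t
    exact (s.continuous.mul t.continuous).intervalIntegrable a b
  rw [← intervalIntegral.integral_add (hint _ _) (hint _ _)]
  have hd : ∀ x : ℝ, HasDerivAt (fun x => (q*r).eval x)
      (q.derivative.eval x * r.eval x + r.derivative.eval x * q.eval x) x := by
    intro x
    have := (q*r).hasDerivAt x
    simpa [Polynomial.derivative_mul, mul_comm, add_comm] using this
  have := intervalIntegral.integral_eq_sub_of_hasDerivAt (f := fun x => (q*r).eval x) (a := a) (b := b)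
    (fun x _ => hd x) (by
      apply Continuous.intervalIntegrable
      exact (q.derivative.continuous.mul r.continuous).add
        (r.derivative.continuous.mul q.continuous))
  simpa [Polynomial.eval_mul, mul_comm] using this

/-- The two volume terms combine via FTC. -/
lemma elem_sum {N p : ℕ} (nodes : Fin (N + 1) → ℝ) (Ψ Φ : Fin N → ℝ → ℝ)
    (hΨ : IsPolyPiece N p Ψ) (hΦ : IsPolyPiece N p Φ) :
    elemInt nodes (fun i x => deriv (Ψ i) x * Φ i x)
      + elemInt nodes (fun i x => deriv (Φ i) x * Ψ i x)
    = ∑ i : Fin N, (Ψ i (nodes i.succ) * Φ i (nodes i.succ)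
        - Ψ i (nodes i.castSucc) * Φ i (nodes i.castSucc)) := by
  unfold elemInt
  rw [← Finset.sum_add_distrib]
  apply Finset.sum_congr rfl
  intro i _
  obtain ⟨q, -, hq⟩ := hΨ i
  obtain ⟨r, -, hr⟩ := hΦ i
  have hqf : Ψ i = fun x => q.eval x := funext hq
  have hrf : Φ i = fun x => r.eval x := funext hr
  simp only [hqf, hrf, Polynomial.deriv]
  exact poly_ftc q r _ _

lemma jump_sum_aux {N : ℕ} (nodes : Fin (N + 1) → ℝ) (Ψ Φ : Fin N → ℝ → ℝ) :
    ∑ j : Fin N, (traceMinus nodes Ψ j * traceMinus nodes Φ j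
        - tracePlus nodes Ψ j * tracePlus nodes Φ j)
    = ∑ i : Fin N, (Ψ i (nodes i.succ) * Φ i (nodes i.succ)
        - Ψ i (nodes i.castSucc) * Φ i (nodes i.castSucc)) := by
  rw [Finset.sum_sub_distrib, Finset.sum_sub_distrib]
  congr 1
  exact sum_prevIdx (fun i => Ψ i (nodes i.succ) * Φ i (nodes i.succ))

/-- Discrete integration by parts,
∫ G^±[Ψ] Φ = − ∫ Ψ G^∓[Φ] for all Ψ, Φ ∈ V_p. -/
theorem discrete_integration_by_parts
    (N p : ℕ) (hN : 0 < N) (nodes : Fin (N + 1) → ℝ)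
    (hmono : StrictMono nodes) (h0 : nodes 0 = 0) (h1 : nodes (Fin.last N) = 1)
    (Ψ Φ GpΨ GmΨ GpΦ GmΦ : Fin N → ℝ → ℝ)
    (hΨ : IsPolyPiece N p Ψ) (hΦ : IsPolyPiece N p Φ)
    (hGpΨ : IsDiscGradPlus p nodes Ψ GpΨ) (hGmΨ : IsDiscGradMinus p nodes Ψ GmΨ)
    (hGpΦ : IsDiscGradPlus p nodes Φ GpΦ) (hGmΦ : IsDiscGradMinus p nodes Φ GmΦ) :
    elemInt nodes (fun i x => GpΨ i x * Φ i x)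
        = -elemInt nodes (fun i x => Ψ i x * GmΦ i x)
    ∧ elemInt nodes (fun i x => GmΨ i x * Φ i x)
        = -elemInt nodes (fun i x => Ψ i x * GpΦ i x) := by
  have hcomm : ∀ (A B : Fin N → ℝ → ℝ),
      elemInt nodes (fun i x => A i x * B i x) = elemInt nodes (fun i x => B i x * A i x) := by
    intro A B; unfold elemInt; simp [mul_comm]
  have hvol := elem_sum nodes Ψ Φ hΨ hΦ
  constructor
  · have e1 := hGpΨ.2 Φ hΦ
    have e2 := hGmΦ.2 Ψ hΨ
    rw [hcomm Ψ GmΦ, e1, e2]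
    have hj : ∑ j : Fin N, jmp nodes Ψ j * tracePlus nodes Φ j
        + ∑ j : Fin N, jmp nodes Φ j * traceMinus nodes Ψ j
        = ∑ i : Fin N, (Ψ i (nodes i.succ) * Φ i (nodes i.succ)
            - Ψ i (nodes i.castSucc) * Φ i (nodes i.castSucc)) := by
      rw [← jump_sum_aux nodes Ψ Φ, ← Finset.sum_add_distrib]
      apply Finset.sum_congr rfl
      intro j _
      simp only [jmp]; ring
    linarith [hvol, hj]
  · have e1 := hGmΨ.2 Φ hΦ
    have e2 := hGpΦ.2 Ψ hΨ
    rw [hcomm Ψ GpΦ, e1, e2]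
    have hj : ∑ j : Fin N, jmp nodes Ψ j * traceMinus nodes Φ j
        + ∑ j : Fin N, jmp nodes Φ j * tracePlus nodes Ψ j
        = ∑ i : Fin N, (Ψ i (nodes i.succ) * Φ i (nodes i.succ)
            - Ψ i (nodes i.castSucc) * Φ i (nodes i.castSucc)) := by
      rw [← jump_sum_aux nodes Ψ Φ, ← Finset.sum_add_distrib]
      apply Finset.sum_congr rfl
      intro j _
      simp only [jmp]; ring
    linarith [hvol, hj]
end
end

section
/- Let D⁻ : V_p → V_{p+1} ∩ C⁰(S¹) be the discrete reconstruction operator satisfying ∫ ∂ₓD⁻[Ψ]Φ = ∫ G⁻[Ψ]Φ for all Φ ∈ V_p and (D⁻[Ψ])⁻ = Ψ⁺ at interfaces. Then for all Ψ ∈ V_p: (i) ‖Ψ − D⁻[Ψ]‖²_{L²(S¹)} ≲ ‖√(h_E^−)⟦Ψ⟧‖²_{L²(E)}, and (ii) ‖Ψ − D⁻[Ψ]‖²_{dG} ≲ ‖√(h_E^{−1})⟦Ψ⟧‖²_{L²(E)}, where the hidden constants depend only on the polynomial degree p and the local mesh-ratio bound. -/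
open scoped BigOperators
noncomputable section

/-- Local element size h_i. -/
def elemSize {N : ℕ} (nodes : Fin (N + 1) → ℝ) (i : Fin N) : ℝ :=
  nodes i.succ - nodes i.castSucc

/-- Interface mesh size h_E(x_j) = (h_{j−1} + h_j)/2. -/
def intfSize {N : ℕ} (nodes : Fin (N + 1) → ℝ) (j : Fin N) : ℝ :=
  (elemSize nodes (prevIdx j) + elemSize nodes j) / 2

/-!
On an element `[a, b]` the error `E = Ψ - D⁻[Ψ]` is a polynomial of degree `≤ p + 1` with
`E a = 0` (the trace condition and continuity of `D⁻[Ψ]`), and testing both defining identities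
with a `φ ∈ P_p` supported on that element gives `∫ₐᵇ E' φ = ⟦Ψ⟧(b) φ(b)`. So `E'` is `⟦Ψ⟧(b)`
times the `L²(a, b)` Riesz representer of evaluation at `b` on `P_p`, the affine pull-back of one
fixed representer `K` on `[-1, 1]`. Hence `‖E‖²` and `‖E'‖²` on the element are exactly
`h ⟦Ψ⟧(b)²` and `⟦Ψ⟧(b)² / h` times constants depending only on `p`. Summing over elements, and
comparing `1 / h_{j-1}` with `1 / h_E` by the mesh-ratio bound, gives both estimates; the jumps of
`E` are those of `Ψ` because `D⁻[Ψ]` is continuous.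
-/

open Polynomial MeasureTheory intervalIntegral

namespace Polynomial

lemma intervalIntegrable_eval_mul_eval (q r : ℝ[X]) (a b : ℝ) :
    IntervalIntegrable (fun x => q.eval x * r.eval x) volume a b :=
  (q.continuous.mul r.continuous).intervalIntegrable a b

lemma eq_zero_of_integral_sq_eq_zero {a b : ℝ} (hab : a < b) {q : ℝ[X]}
    (h : ∫ x in a..b, q.eval x ^ 2 = 0) : q = 0 := by
  have hae : (fun x => q.eval x ^ 2) =ᵐ[volume.restrict (Set.Ioc a b)] 0 :=
    (integral_eq_zero_iff_of_le_of_nonneg_ae hab.le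
      (Filter.Eventually.of_forall fun x => sq_nonneg _)
      ((q.continuous.pow 2).intervalIntegrable a b)).mp h
  have hIoo : Set.EqOn (fun x => q.eval x ^ 2) 0 (Set.Ioo a b) :=
    Measure.eqOn_Ioo_of_ae_eq (μ := volume)
      (ae_restrict_of_ae_restrict_of_subset Set.Ioo_subset_Ioc_self hae)
      (q.continuous.pow 2).continuousOn continuousOn_const
  refine q.eq_zero_of_infinite_isRoot ((Set.Ioo_infinite hab).mono fun x hx => ?_)
  exact pow_eq_zero_iff two_ne_zero |>.mp (hIoo hx)

lemma eq_of_forall_integral_mul_eq {a b : ℝ} (hab : a < b) {p : ℕ} {P Q : ℝ[X]}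
    (hP : P.natDegree ≤ p) (hQ : Q.natDegree ≤ p)
    (h : ∀ φ : ℝ[X], φ.natDegree ≤ p →
      ∫ x in a..b, P.eval x * φ.eval x = ∫ x in a..b, Q.eval x * φ.eval x) :
    P = Q := by
  have hdeg : (P - Q).natDegree ≤ p := (natDegree_sub_le _ _).trans (max_le hP hQ)
  refine sub_eq_zero.mp (eq_zero_of_integral_sq_eq_zero hab ?_)
  have := h _ hdeg
  rw [← sub_eq_zero, ← integral_sub (intervalIntegrable_eval_mul_eval _ _ a b)
    (intervalIntegrable_eval_mul_eval _ _ a b)] at this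
  simpa only [eval_sub, sq, sub_mul] using this

lemma mem_degreeLT_succ_iff_natDegree_le {p : ℕ} {q : ℝ[X]} :
    q ∈ degreeLT ℝ (p + 1) ↔ q.natDegree ≤ p := by
  rw [degreeLT_succ_eq_degreeLE, mem_degreeLE, natDegree_le_iff_degree_le]

def l2Form (p : ℕ) (a b : ℝ) : LinearMap.BilinForm ℝ (degreeLT ℝ (p + 1)) :=
  LinearMap.mk₂ ℝ (fun q r => ∫ x in a..b, (q : ℝ[X]).eval x * (r : ℝ[X]).eval x)
    (fun q₁ q₂ r => by
      simp only [Submodule.coe_add, eval_add, add_mul]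
      exact integral_add (intervalIntegrable_eval_mul_eval _ _ a b)
        (intervalIntegrable_eval_mul_eval _ _ a b))
    (fun c q r => by
      simp only [Submodule.coe_smul, eval_smul, smul_eq_mul, mul_assoc]
      exact intervalIntegral.integral_const_mul c _)
    (fun q r₁ r₂ => by
      simp only [Submodule.coe_add, eval_add, mul_add]
      exact integral_add (intervalIntegrable_eval_mul_eval _ _ a b)
        (intervalIntegrable_eval_mul_eval _ _ a b))
    (fun c q r => by
      simp only [Submodule.coe_smul, eval_smul, smul_eq_mul, mul_left_comm _ c]
      exact intervalIntegral.integral_const_mul c _)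

lemma l2Form_nondegenerate (p : ℕ) {a b : ℝ} (hab : a < b) : (l2Form p a b).Nondegenerate :=
  ⟨fun q hq => Subtype.ext <| eq_zero_of_integral_sq_eq_zero hab <| by
    simpa only [l2Form, LinearMap.mk₂_apply, sq] using hq q,
  fun q hq => Subtype.ext <| eq_zero_of_integral_sq_eq_zero hab <| by
    simpa only [l2Form, LinearMap.mk₂_apply, sq] using hq q⟩

lemma exists_integral_mul_eq_eval (p : ℕ) {a b : ℝ} (hab : a < b) (y : ℝ) :
    ∃ K : ℝ[X], K.natDegree ≤ p ∧ ∀ φ : ℝ[X], φ.natDegree ≤ p →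
      ∫ x in a..b, K.eval x * φ.eval x = φ.eval y := by
  have : FiniteDimensional ℝ (degreeLT ℝ (p + 1)) :=
    Module.Finite.equiv (degreeLTEquiv ℝ (p + 1)).symm
  let ev : Module.Dual ℝ (degreeLT ℝ (p + 1)) := (leval y).comp (degreeLT ℝ (p + 1)).subtype
  let K := ((l2Form p a b).toDual (l2Form_nondegenerate p hab)).symm ev
  exact ⟨K, mem_degreeLT_succ_iff_natDegree_le.mp K.2, fun φ hφ =>
    LinearMap.BilinForm.apply_toDual_symm_apply (hB := l2Form_nondegenerate p hab) ev
      ⟨φ, mem_degreeLT_succ_iff_natDegree_le.mpr hφ⟩⟩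

end Polynomial

def refCoord (a b x : ℝ) : ℝ := 2 / (b - a) * x + (a + b) / (a - b)

section RefCoord

variable {a b : ℝ}

lemma refCoord_left (hab : a ≠ b) : refCoord a b a = -1 := by
  unfold refCoord
  field_simp [sub_ne_zero.mpr hab, sub_ne_zero.mpr hab.symm]
  ring

lemma refCoord_right (hab : a ≠ b) : refCoord a b b = 1 := by
  unfold refCoord
  field_simp [sub_ne_zero.mpr hab, sub_ne_zero.mpr hab.symm]
  ring

lemma mul_refCoord_add (hab : a ≠ b) (x : ℝ) :
    (b - a) / 2 * refCoord a b x + (a + b) / 2 = x := by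
  unfold refCoord
  field_simp [sub_ne_zero.mpr hab, sub_ne_zero.mpr hab.symm]
  ring

lemma mul_integral_comp_refCoord (f : ℝ → ℝ) (hab : a ≠ b) (x : ℝ) :
    2 / (b - a) * ∫ s in a..x, f (refCoord a b s) = ∫ t in (-1)..refCoord a b x, f t := by
  rw [← refCoord_left hab]
  exact intervalIntegral.smul_integral_comp_mul_add f _ _

lemma integral_comp_refCoord (f : ℝ → ℝ) (hab : a ≠ b) :
    ∫ x in a..b, f (refCoord a b x) = (b - a) / 2 * ∫ t in (-1)..1, f t := by
  have : b - a ≠ 0 := sub_ne_zero.mpr hab.symm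
  have h := mul_integral_comp_refCoord f hab b
  rw [refCoord_right hab] at h
  rw [← h]
  field_simp

end RefCoord

namespace Polynomial

def scaledRepr (K : ℝ[X]) (a b : ℝ) : ℝ[X] :=
  C (2 / (b - a)) * K.comp (C (2 / (b - a)) * X + C ((a + b) / (a - b)))

variable {p : ℕ} {K : ℝ[X]} {a b : ℝ}

lemma eval_scaledRepr (x : ℝ) :
    (scaledRepr K a b).eval x = 2 / (b - a) * K.eval (refCoord a b x) := by
  simp [scaledRepr, refCoord]

lemma natDegree_scaledRepr_le : (scaledRepr K a b).natDegree ≤ K.natDegree := by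
  refine (natDegree_C_mul_le _ _).trans (natDegree_comp_le.trans ?_)
  have : (C (2 / (b - a)) * X + C ((a + b) / (a - b))).natDegree ≤ 1 := by compute_degree
  simpa using Nat.mul_le_mul_left K.natDegree this

lemma integral_scaledRepr_mul_eq_eval
    (hK : ∀ φ : ℝ[X], φ.natDegree ≤ p → ∫ x in (-1)..1, K.eval x * φ.eval x = φ.eval 1)
    (hab : a ≠ b) {φ : ℝ[X]} (hφ : φ.natDegree ≤ p) :
    ∫ x in a..b, (scaledRepr K a b).eval x * φ.eval x = φ.eval b := by
  have : b - a ≠ 0 := sub_ne_zero.mpr hab.symm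
  set ψ := φ.comp (C ((b - a) / 2) * X + C ((a + b) / 2))
  have hψ : ψ.natDegree ≤ p := by
    refine natDegree_comp_le.trans ?_
    have : (C ((b - a) / 2) * X + C ((a + b) / 2)).natDegree ≤ 1 := by compute_degree
    simpa using Nat.mul_le_mul hφ this
  have hψ_eval (x : ℝ) : ψ.eval (refCoord a b x) = φ.eval x := by
    simp [ψ, mul_refCoord_add hab]
  calc ∫ x in a..b, (scaledRepr K a b).eval x * φ.eval x
      = 2 / (b - a) * ∫ x in a..b, (fun t => K.eval t * ψ.eval t) (refCoord a b x) := by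
        rw [← intervalIntegral.integral_const_mul]
        simp only [eval_scaledRepr, hψ_eval, mul_assoc]
    _ = φ.eval b := by
        rw [integral_comp_refCoord (fun t => K.eval t * ψ.eval t) hab, ← mul_assoc, hK ψ hψ,
          ← refCoord_right hab, hψ_eval]
        field_simp

lemma eq_smul_scaledRepr
    (hK : ∀ φ : ℝ[X], φ.natDegree ≤ p → ∫ x in (-1)..1, K.eval x * φ.eval x = φ.eval 1)
    (hKdeg : K.natDegree ≤ p) (hab : a < b) {J : ℝ} {P : ℝ[X]} (hP : P.natDegree ≤ p)
    (hPrepr : ∀ φ : ℝ[X], φ.natDegree ≤ p → ∫ x in a..b, P.eval x * φ.eval x = J * φ.eval b) :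
    P = J • scaledRepr K a b := by
  refine eq_of_forall_integral_mul_eq hab hP
    ((natDegree_smul_le _ _).trans (natDegree_scaledRepr_le.trans hKdeg)) fun φ hφ => ?_
  simp only [eval_smul, smul_eq_mul, mul_assoc, intervalIntegral.integral_const_mul,
    integral_scaledRepr_mul_eq_eval hK hab.ne hφ, hPrepr φ hφ]

lemma eval_eq_mul_integral_of_derivative_eq (hab : a ≠ b) {J : ℝ} {E : ℝ[X]}
    (hEa : E.eval a = 0) (hE' : E.derivative = J • scaledRepr K a b) (x : ℝ) :
    E.eval x = J * ∫ t in (-1)..refCoord a b x, K.eval t := by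
  have hFTC : ∫ s in a..x, E.derivative.eval s = E.eval x - E.eval a :=
    integral_eq_sub_of_hasDerivAt (fun s _ => E.hasDerivAt s)
      (E.derivative.continuous.intervalIntegrable a x)
  rw [← mul_integral_comp_refCoord _ hab, ← sub_zero (E.eval x), ← hEa, ← hFTC, hE']
  simp only [eval_smul, eval_scaledRepr, smul_eq_mul, intervalIntegral.integral_const_mul]

lemma integral_sq_of_integral_derivative_mul_eq_eval
    (hK : ∀ φ : ℝ[X], φ.natDegree ≤ p → ∫ x in (-1)..1, K.eval x * φ.eval x = φ.eval 1)
    (hKdeg : K.natDegree ≤ p) (hab : a < b) {J : ℝ} {E : ℝ[X]} (hEa : E.eval a = 0)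
    (hE'deg : E.derivative.natDegree ≤ p)
    (hE'repr : ∀ φ : ℝ[X], φ.natDegree ≤ p →
      ∫ x in a..b, E.derivative.eval x * φ.eval x = J * φ.eval b) :
    ∫ x in a..b, E.eval x ^ 2
        = (b - a) / 2 * (∫ t in (-1)..1, (∫ s in (-1)..t, K.eval s) ^ 2) * J ^ 2 ∧
      ∫ x in a..b, E.derivative.eval x ^ 2
        = 2 / (b - a) * (∫ t in (-1)..1, K.eval t ^ 2) * J ^ 2 := by
  have hE' := eq_smul_scaledRepr hK hKdeg hab hE'deg hE'repr
  have hE := eval_eq_mul_integral_of_derivative_eq hab.ne hEa hE'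
  constructor
  · simp only [hE, mul_pow]
    rw [integral_comp_refCoord (fun t => J ^ 2 * (∫ s in (-1)..t, K.eval s) ^ 2) hab.ne,
      intervalIntegral.integral_const_mul]
    ring
  · simp only [hE', eval_smul, eval_scaledRepr, smul_eq_mul, mul_pow]
    rw [integral_comp_refCoord (fun t => J ^ 2 * ((2 / (b - a)) ^ 2 * K.eval t ^ 2)) hab.ne,
      intervalIntegral.integral_const_mul, intervalIntegral.integral_const_mul]
    have : b - a ≠ 0 := (sub_pos.mpr hab).ne'
    field_simp

end Polynomial

def nextIdx {N : ℕ} (j : Fin N) : Fin N :=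
  ⟨(j.1 + 1) % N, Nat.mod_lt _ j.pos⟩

section Mesh

variable {N : ℕ}

lemma prevIdx_nextIdx (i : Fin N) : prevIdx (nextIdx i) = i := by
  have := i.pos
  ext
  simp only [prevIdx, nextIdx, Nat.mod_add_mod]
  rw [show i.1 + 1 + (N - 1) = i.1 + N by omega, Nat.add_mod_right, Nat.mod_eq_of_lt i.isLt]

lemma nextIdx_prevIdx (j : Fin N) : nextIdx (prevIdx j) = j := by
  have := j.pos
  ext
  simp only [prevIdx, nextIdx, Nat.mod_add_mod]
  rw [show j.1 + (N - 1) + 1 = j.1 + N by omega, Nat.add_mod_right, Nat.mod_eq_of_lt j.isLt]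

def prevIdxEquiv (N : ℕ) : Equiv.Perm (Fin N) :=
  ⟨prevIdx, nextIdx, nextIdx_prevIdx, prevIdx_nextIdx⟩

lemma sum_comp_nextIdx (g : Fin N → Fin N → ℝ) :
    ∑ i, g i (nextIdx i) = ∑ j, g (prevIdx j) j := by
  rw [← Equiv.sum_comp (prevIdxEquiv N) fun i => g i (nextIdx i)]
  simp only [prevIdxEquiv, Equiv.coe_fn_mk, nextIdx_prevIdx]

lemma jmp_sub (nodes : Fin (N + 1) → ℝ) (f g : Fin N → ℝ → ℝ) (j : Fin N) :
    jmp nodes (fun i x => f i x - g i x) j = jmp nodes f j - jmp nodes g j := by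
  simp only [jmp, traceMinus, tracePlus]
  ring

lemma isPolyPiece_single {p : ℕ} (i : Fin N) {φ : Polynomial ℝ} (hφ : φ.natDegree ≤ p) :
    IsPolyPiece N p (Pi.single i fun x => φ.eval x) := by
  intro k
  by_cases hk : k = i
  · subst hk
    exact ⟨φ, hφ, fun x => by simp⟩
  · exact ⟨0, by simp, fun x => by simp [hk]⟩

lemma elemInt_mul_single (nodes : Fin (N + 1) → ℝ) (F : Fin N → ℝ → ℝ) (i : Fin N)
    (f : ℝ → ℝ) :
    elemInt nodes (fun k x => F k x * (Pi.single i f : Fin N → ℝ → ℝ) k x)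
      = ∫ x in nodes i.castSucc..nodes i.succ, F i x * f x := by
  unfold elemInt
  rw [Finset.sum_eq_single_of_mem i (Finset.mem_univ i) fun k _ hk => by simp [hk]]
  simp

lemma sum_mul_traceMinus_single (nodes : Fin (N + 1) → ℝ) (g : Fin N → ℝ) (i : Fin N)
    (f : ℝ → ℝ) :
    ∑ j, g j * traceMinus nodes (Pi.single i f) j = g (nextIdx i) * f (nodes i.succ) := by
  rw [Finset.sum_eq_single_of_mem (nextIdx i) (Finset.mem_univ _) fun j _ hj => ?_]
  · simp [traceMinus, prevIdx_nextIdx]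
  · have : prevIdx j ≠ i := fun h => hj (h ▸ (nextIdx_prevIdx j).symm)
    simp [traceMinus, this]

end Mesh

lemma two_div_mul_add_le_mul_div {h h' ρ c u : ℝ} (hh : 0 < h) (hh' : 0 < h')
    (hρ : h' ≤ ρ * h) (hc : 0 ≤ c) (hu : 0 ≤ u) :
    2 / h * c * u + u / ((h + h') / 2) ≤ (c * (1 + ρ) + 1) * (u / ((h + h') / 2)) := by
  have hmean : 0 < (h + h') / 2 := by positivity
  have : 2 / h ≤ (1 + ρ) / ((h + h') / 2) := by
    rw [div_le_div_iff₀ hh hmean]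
    linarith
  calc 2 / h * c * u + u / ((h + h') / 2)
      ≤ (1 + ρ) / ((h + h') / 2) * c * u + u / ((h + h') / 2) := by gcongr
    _ = (c * (1 + ρ) + 1) * (u / ((h + h') / 2)) := by ring

section Reconstruction

variable {N p : ℕ} {nodes : Fin (N + 1) → ℝ} {Ψ GΨ DΨ : Fin N → ℝ → ℝ}

lemma integral_deriv_sub_deriv_mul_eq_jmp_mul (hG : IsDiscGradMinus p nodes Ψ GΨ)
    (hD : ∀ Φ : Fin N → ℝ → ℝ, IsPolyPiece N p Φ →
      elemInt nodes (fun i x => deriv (DΨ i) x * Φ i x)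
        = elemInt nodes (fun i x => GΨ i x * Φ i x))
    (i : Fin N) {φ : ℝ[X]} (hφ : φ.natDegree ≤ p) :
    (∫ x in nodes i.castSucc..nodes i.succ, deriv (Ψ i) x * φ.eval x)
      - ∫ x in nodes i.castSucc..nodes i.succ, deriv (DΨ i) x * φ.eval x
      = jmp nodes Ψ (nextIdx i) * φ.eval (nodes i.succ) := by
  have hΦ := isPolyPiece_single i hφ
  have hGΦ := hG.2 _ hΦ
  have hDΦ := hD _ hΦ
  simp only [elemInt_mul_single, sum_mul_traceMinus_single] at hGΦ hDΦ
  linarith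

lemma integral_sq_sub_reconstruction_eq {K : ℝ[X]}
    (hK : ∀ φ : ℝ[X], φ.natDegree ≤ p → ∫ x in (-1)..1, K.eval x * φ.eval x = φ.eval 1)
    (hKdeg : K.natDegree ≤ p) (hmono : StrictMono nodes) (hΨ : IsPolyPiece N p Ψ)
    (hG : IsDiscGradMinus p nodes Ψ GΨ) (hDΨ : IsPolyPiece N (p + 1) DΨ)
    (hcont : ∀ j, jmp nodes DΨ j = 0)
    (hD : ∀ Φ : Fin N → ℝ → ℝ, IsPolyPiece N p Φ →
      elemInt nodes (fun i x => deriv (DΨ i) x * Φ i x)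
        = elemInt nodes (fun i x => GΨ i x * Φ i x))
    (htrace : ∀ j, traceMinus nodes DΨ j = tracePlus nodes Ψ j) (i : Fin N) :
    ∫ x in nodes i.castSucc..nodes i.succ, (Ψ i x - DΨ i x) ^ 2
        = elemSize nodes i / 2 * (∫ t in (-1)..1, (∫ s in (-1)..t, K.eval s) ^ 2)
          * jmp nodes Ψ (nextIdx i) ^ 2 ∧
      ∫ x in nodes i.castSucc..nodes i.succ, (deriv (Ψ i) x - deriv (DΨ i) x) ^ 2
        = 2 / elemSize nodes i * (∫ t in (-1)..1, K.eval t ^ 2) * jmp nodes Ψ (nextIdx i) ^ 2 := by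
  obtain ⟨q, hq, hΨi⟩ := hΨ i
  obtain ⟨r, hr, hDΨi⟩ := hDΨ i
  have hderivΨ (x : ℝ) : deriv (Ψ i) x = q.derivative.eval x := by
    rw [funext hΨi, Polynomial.deriv]
  have hderivDΨ (x : ℝ) : deriv (DΨ i) x = r.derivative.eval x := by
    rw [funext hDΨi, Polynomial.deriv]
  have heval (x : ℝ) : Ψ i x - DΨ i x = (q - r).eval x := by
    rw [eval_sub, hΨi, hDΨi]
  have hderiv (x : ℝ) : deriv (Ψ i) x - deriv (DΨ i) x = (q - r).derivative.eval x := by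
    rw [derivative_sub, eval_sub, hderivΨ, hderivDΨ]
  have hleft : (q - r).eval (nodes i.castSucc) = 0 := by
    have hjmp := hcont i
    have htr := htrace i
    simp only [jmp, tracePlus] at hjmp htr
    linarith [heval (nodes i.castSucc)]
  have hdeg : (q - r).derivative.natDegree ≤ p :=
    (natDegree_derivative_le _).trans <| Nat.sub_le_of_le_add <|
      (natDegree_sub_le _ _).trans (max_le (hq.trans p.le_succ) hr)
  have hrepr (φ : ℝ[X]) (hφ : φ.natDegree ≤ p) :
      ∫ x in nodes i.castSucc..nodes i.succ, (q - r).derivative.eval x * φ.eval x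
        = jmp nodes Ψ (nextIdx i) * φ.eval (nodes i.succ) := by
    rw [← integral_deriv_sub_deriv_mul_eq_jmp_mul hG hD i hφ, ← integral_sub
      (by simpa only [hderivΨ] using intervalIntegrable_eval_mul_eval _ φ _ _)
      (by simpa only [hderivDΨ] using intervalIntegrable_eval_mul_eval _ φ _ _)]
    simp only [← sub_mul, hderiv]
  simpa only [heval, hderiv, elemSize] using
    integral_sq_of_integral_derivative_mul_eq_eval hK hKdeg (hmono i.castSucc_lt_succ) hleft
      hdeg hrepr

end Reconstruction

/-- Approximation properties of the discrete reconstruction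
operator D⁻ : V_p → V_{p+1} ∩ C⁰(S¹):
(i)  ‖Ψ − D⁻[Ψ]‖²_{L²(S¹)} ≲ ‖√(h_E⁻)⟦Ψ⟧‖²_{L²(E)},
(ii) ‖Ψ − D⁻[Ψ]‖²_{dG} ≲ ‖√(h_E⁻¹)⟦Ψ⟧‖²_{L²(E)},
with constants depending only on p and the local mesh-ratio bound ρ. -/
theorem discrete_reconstruction_approximation (p : ℕ) (ρ : ℝ) (hρ : 1 ≤ ρ) :
    ∃ C : ℝ, 0 < C ∧
    ∀ (N : ℕ), 0 < N →
    ∀ (nodes : Fin (N + 1) → ℝ), StrictMono nodes →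
      nodes 0 = 0 → nodes (Fin.last N) = 1 →
      -- bounded ratio of adjacent element sizes
      (∀ j : Fin N, elemSize nodes (prevIdx j) ≤ ρ * elemSize nodes j
        ∧ elemSize nodes j ≤ ρ * elemSize nodes (prevIdx j)) →
    ∀ (Ψ GΨ DΨ : Fin N → ℝ → ℝ),
      IsPolyPiece N p Ψ →
      IsDiscGradMinus p nodes Ψ GΨ →
      -- D⁻[Ψ] ∈ V_{p+1}, continuous across interfaces (including periodic wrap)
      IsPolyPiece N (p + 1) DΨ →
      (∀ j : Fin N, jmp nodes DΨ j = 0) →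
      -- ∫ ∂ₓ D⁻[Ψ] Φ = ∫ G⁻[Ψ] Φ for all Φ ∈ V_p
      (∀ Φ : Fin N → ℝ → ℝ, IsPolyPiece N p Φ →
        elemInt nodes (fun i x => deriv (DΨ i) x * Φ i x)
          = elemInt nodes (fun i x => GΨ i x * Φ i x)) →
      -- (D⁻[Ψ])⁻ = Ψ⁺ at interfaces
      (∀ j : Fin N, traceMinus nodes DΨ j = tracePlus nodes Ψ j) →
      -- (i)
      ((∑ i : Fin N, ∫ x in (nodes i.castSucc)..(nodes i.succ),
          (Ψ i x - DΨ i x) ^ 2)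
        ≤ C * ∑ j : Fin N, elemSize nodes (prevIdx j) * (jmp nodes Ψ j) ^ 2)
      -- (ii)
      ∧ ((∑ i : Fin N, ∫ x in (nodes i.castSucc)..(nodes i.succ),
            (deriv (Ψ i) x - deriv (DΨ i) x) ^ 2)
          + ∑ j : Fin N, (jmp nodes (fun i x => Ψ i x - DΨ i x) j) ^ 2
              / intfSize nodes j
        ≤ C * ∑ j : Fin N, (jmp nodes Ψ j) ^ 2 / intfSize nodes j) := by
  obtain ⟨K, hKdeg, hK⟩ := exists_integral_mul_eq_eval p (by norm_num : (-1 : ℝ) < 1) 1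
  set cM := ∫ t in (-1)..1, (∫ s in (-1)..t, K.eval s) ^ 2
  set cK := ∫ t in (-1)..1, K.eval t ^ 2
  have hcM : 0 ≤ cM := integral_nonneg (by norm_num) fun _ _ => sq_nonneg _
  have hcK : 0 ≤ cK := integral_nonneg (by norm_num) fun _ _ => sq_nonneg _
  have hcKρ : 0 ≤ cK * (1 + ρ) := mul_nonneg hcK (by linarith)
  refine ⟨cM / 2 + cK * (1 + ρ) + 1, by positivity, ?_⟩
  intro N _ nodes hmono _ _ hratio Ψ GΨ DΨ hΨ hG hDΨ hcont hD htrace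
  have hsize (i : Fin N) : 0 < elemSize nodes i := sub_pos.mpr (hmono i.castSucc_lt_succ)
  have helem := integral_sq_sub_reconstruction_eq hK hKdeg hmono hΨ hG hDΨ hcont hD htrace
  constructor
  · rw [Finset.sum_congr rfl fun i _ => (helem i).1,
      sum_comp_nextIdx fun i j => elemSize nodes i / 2 * cM * jmp nodes Ψ j ^ 2, Finset.mul_sum]
    refine Finset.sum_le_sum fun j _ => ?_
    have hu := mul_nonneg (hsize (prevIdx j)).le (sq_nonneg (jmp nodes Ψ j))
    calc _ = cM / 2 * (elemSize nodes (prevIdx j) * jmp nodes Ψ j ^ 2) := by ring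
      _ ≤ _ := by gcongr; linarith
  · simp only [jmp_sub, hcont, sub_zero]
    rw [Finset.sum_congr rfl fun i _ => (helem i).2,
      sum_comp_nextIdx fun i j => 2 / elemSize nodes i * cK * jmp nodes Ψ j ^ 2, Finset.mul_sum,
      ← Finset.sum_add_distrib]
    refine Finset.sum_le_sum fun j _ => ?_
    refine (two_div_mul_add_le_mul_div (hsize _) (hsize j) (hratio j).2 hcK (sq_nonneg _)).trans
      (mul_le_mul_of_nonneg_right (by linarith) (div_nonneg (sq_nonneg _) ?_))
    linarith [hsize j, hsize (prevIdx j)]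
end
end
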